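/- Every element Σ_i a_i⊗h_i⊗b_i⊗g_i of H1□H1 ⊆ (A⊗H)⊗(A⊗H) satisfies the three identities: (a) Σ_i a_i ⊗ ε(h_i) d((b_i)_(1))(g_i)_(1) ⊗ (b_i)_(2) ⊗ (g_i)_(2) = Σ_i a_i ⊗ h_i ⊗ b_i ⊗ g_i in A⊗H⊗A⊗H; (b) Σ_i a_i ⊗ ε(b_i) h_i ⊗ g_i = Σ_i a_i ⊗ ε(h_i) d(b_i)(g_i)_(1) ⊗ (g_i)_(2) in A⊗H⊗H; (c) Σ_i ε(b_i)ε(g_i) a_i ⊗ h_i = Σ_i ε(h_i) a_i ⊗ d(b_i)g_i in A⊗H. (Established in the proof of Theorem 2.6.) -/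

import Mathlib

/-!
Each identity comes from applying a counit to the previous one. Applying `e ⊗ id ⊗ id` to the
cotensor condition `(DR ⊗ id) x = (id ⊗ DL) x` gives (a), because `(e ⊗ id) ∘ DR = id` by the
counit laws of `A` and `H`. Applying `id ⊗ id ⊗ s` to (a) gives (b), because
`(id ⊗ s) ∘ DL = f`, and applying `id ⊗ (id ⊗ ε)` to (b) gives (c), because `(id ⊗ ε) ∘ f = t`.
-/

open TensorProduct

noncomputable section

variable (k A H : Type*) [Field k] [Ring A] [Ring H]
  [HopfAlgebra k A] [HopfAlgebra k H]

/-- `t(a⊗h) = d(a)h`. -/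
def tmap (d : A →ₗ[k] H) : A ⊗[k] H →ₗ[k] H :=
  LinearMap.mul' k H ∘ₗ map d LinearMap.id

/-- `s(a⊗h) = ε(a)h`. -/
def smap : A ⊗[k] H →ₗ[k] H :=
  (TensorProduct.lid k H).toLinearMap ∘ₗ map (Coalgebra.counit : A →ₗ[k] k) LinearMap.id

/-- `i(h) = 1⊗h`. -/
def imap : H →ₗ[k] A ⊗[k] H := TensorProduct.mk k A H 1

/-- The tensor-product coproduct `Δ(a⊗h) = (a₁⊗h₁) ⊗ (a₂⊗h₂)` on `H1 = A ⊗ H`. -/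
def comul1 : A ⊗[k] H →ₗ[k] (A ⊗[k] H) ⊗[k] (A ⊗[k] H) :=
  (tensorTensorTensorComm k A A H H).toLinearMap ∘ₗ
    map (Coalgebra.comul : A →ₗ[k] A ⊗[k] A) (Coalgebra.comul : H →ₗ[k] H ⊗[k] H)

/-- The tensor-product counit `ε(a⊗h) = ε(a)ε(h)` on `H1 = A ⊗ H`. -/
def counit1 : A ⊗[k] H →ₗ[k] k :=
  (TensorProduct.lid k k).toLinearMap ∘ₗ
    map (Coalgebra.counit : A →ₗ[k] k) (Coalgebra.counit : H →ₗ[k] k)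

/-- The left coaction `DL = (t⊗id)Δ`. -/
def DLmap (d : A →ₗ[k] H) : A ⊗[k] H →ₗ[k] H ⊗[k] (A ⊗[k] H) :=
  map (tmap k A H d) LinearMap.id ∘ₗ comul1 k A H

/-- The right coaction `DR = (id⊗s)Δ`. -/
def DRmap : A ⊗[k] H →ₗ[k] (A ⊗[k] H) ⊗[k] H :=
  map LinearMap.id (smap k A H) ∘ₗ comul1 k A H

/-- The second product `(a⊗h)∘(b⊗g) = ε(h) ab ⊗ g`. -/
def circ : (A ⊗[k] H) ⊗[k] (A ⊗[k] H) →ₗ[k] A ⊗[k] H :=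
  map (LinearMap.mul' k A)
      ((TensorProduct.lid k H).toLinearMap ∘ₗ map (Coalgebra.counit : H →ₗ[k] k) LinearMap.id)
    ∘ₗ (tensorTensorTensorComm k A H A H).toLinearMap

/-- The quantum groupoid antipode `𝒮(a⊗h) = S(a₁) ⊗ d(a₂)h`. -/
def SS (d : A →ₗ[k] H) : A ⊗[k] H →ₗ[k] A ⊗[k] H :=
  map (HopfAlgebra.antipode (R := k) : A →ₗ[k] A) (tmap k A H d)
    ∘ₗ (TensorProduct.assoc k A A H).toLinearMap
    ∘ₗ map (Coalgebra.comul : A →ₗ[k] A ⊗[k] A) LinearMap.id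

/-- The smash product multiplication `(a⊗h)(b⊗g) = a(h₁▷b) ⊗ h₂g`. -/
def smashMul (act : H ⊗[k] A →ₗ[k] A) :
    (A ⊗[k] H) ⊗[k] (A ⊗[k] H) →ₗ[k] A ⊗[k] H :=
  map (LinearMap.mul' k A) LinearMap.id
  ∘ₗ (TensorProduct.assoc k A A H).symm.toLinearMap
  ∘ₗ map LinearMap.id
      (map act (LinearMap.mul' k H)
        ∘ₗ (tensorTensorTensorComm k H H A H).toLinearMap)
  ∘ₗ (TensorProduct.assoc k A (H ⊗[k] H) (A ⊗[k] H)).toLinearMap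
  ∘ₗ map (map LinearMap.id (Coalgebra.comul : H →ₗ[k] H ⊗[k] H)) LinearMap.id

/-- The cotensor product `H1□H1`. -/
def cot (d : A →ₗ[k] H) : Set ((A ⊗[k] H) ⊗[k] (A ⊗[k] H)) :=
  {x | (TensorProduct.assoc k (A ⊗[k] H) H (A ⊗[k] H)).toLinearMap
        (map (DRmap k A H) LinearMap.id x) = map LinearMap.id (DLmap k A H d) x}

/-- A Hopf (algebra) crossed module. -/
structure HopfCrossedModule (act : H ⊗[k] A →ₗ[k] A) (d : A →ₗ[k] H) : Prop where
  /-- `(hg)▷a = h▷(g▷a)` -/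
  act_mul : ∀ (h g : H) (a : A), act ((h * g) ⊗ₜ[k] a) = act (h ⊗ₜ[k] act (g ⊗ₜ[k] a))
  /-- `1▷a = a` -/
  act_one : ∀ a : A, act ((1 : H) ⊗ₜ[k] a) = a
  /-- `h▷(ab) = (h₁▷a)(h₂▷b)` -/
  act_mul_alg : act ∘ₗ map LinearMap.id (LinearMap.mul' k A)
      = LinearMap.mul' k A ∘ₗ map act act
          ∘ₗ (tensorTensorTensorComm k H H A A).toLinearMap
          ∘ₗ map (Coalgebra.comul : H →ₗ[k] H ⊗[k] H) LinearMap.id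
  /-- `h▷1 = ε(h)1` -/
  act_unit : ∀ h : H, act (h ⊗ₜ[k] (1 : A)) = (Coalgebra.counit h : k) • (1 : A)
  /-- `Δ(h▷a) = (h₁▷a₁)⊗(h₂▷a₂)` -/
  act_comul : (Coalgebra.comul : A →ₗ[k] A ⊗[k] A) ∘ₗ act
      = map act act ∘ₗ (tensorTensorTensorComm k H H A A).toLinearMap
          ∘ₗ map (Coalgebra.comul : H →ₗ[k] H ⊗[k] H) (Coalgebra.comul : A →ₗ[k] A ⊗[k] A)
  /-- `ε(h▷a) = ε(h)ε(a)` -/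
  act_counit : ∀ (h : H) (a : A),
      (Coalgebra.counit (act (h ⊗ₜ[k] a)) : k) = Coalgebra.counit h * Coalgebra.counit a
  /-- `h₁ ⊗ (h₂▷a) = h₂ ⊗ (h₁▷a)` -/
  act_cocomm : map LinearMap.id act ∘ₗ (TensorProduct.assoc k H H A).toLinearMap
        ∘ₗ map (Coalgebra.comul : H →ₗ[k] H ⊗[k] H) LinearMap.id
      = map LinearMap.id act ∘ₗ (TensorProduct.assoc k H H A).toLinearMap
        ∘ₗ map ((TensorProduct.comm k H H).toLinearMap
              ∘ₗ (Coalgebra.comul : H →ₗ[k] H ⊗[k] H)) LinearMap.id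
  /-- `d` is multiplicative -/
  d_mul : ∀ a b : A, d (a * b) = d a * d b
  /-- `d(1) = 1` -/
  d_one : d 1 = 1
  /-- `d` is comultiplicative -/
  d_comul : (Coalgebra.comul : H →ₗ[k] H ⊗[k] H) ∘ₗ d
      = map d d ∘ₗ (Coalgebra.comul : A →ₗ[k] A ⊗[k] A)
  /-- `ε∘d = ε` -/
  d_counit : (Coalgebra.counit : H →ₗ[k] k) ∘ₗ d = (Coalgebra.counit : A →ₗ[k] k)
  /-- `d(h▷a) = h₁ d(a) S(h₂)` -/
  d_act : d ∘ₗ act = LinearMap.mul' k H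
      ∘ₗ map LinearMap.id (LinearMap.mul' k H
            ∘ₗ map LinearMap.id (HopfAlgebra.antipode (R := k) : H →ₗ[k] H)
            ∘ₗ (TensorProduct.comm k H H).toLinearMap)
      ∘ₗ (TensorProduct.assoc k H H H).toLinearMap
      ∘ₗ map (Coalgebra.comul : H →ₗ[k] H ⊗[k] H) d
  /-- `d(a)▷b = a₁ b S(a₂)` -/
  crossed : act ∘ₗ map d LinearMap.id = LinearMap.mul' k A
      ∘ₗ map LinearMap.id (LinearMap.mul' k A
            ∘ₗ map LinearMap.id (HopfAlgebra.antipode (R := k) : A →ₗ[k] A)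
            ∘ₗ (TensorProduct.comm k A A).toLinearMap)
      ∘ₗ (TensorProduct.assoc k A A A).toLinearMap
      ∘ₗ map (Coalgebra.comul : A →ₗ[k] A ⊗[k] A) LinearMap.id


/-- `e(a⊗h) = ε(h)a`. -/
def emap : A ⊗[k] H →ₗ[k] A :=
  (TensorProduct.rid k A).toLinearMap ∘ₗ map LinearMap.id (Coalgebra.counit : H →ₗ[k] k)

/-- `f(b⊗g) = d(b)g₁ ⊗ g₂`. -/
def fmap (d : A →ₗ[k] H) : A ⊗[k] H →ₗ[k] H ⊗[k] H :=
  map (LinearMap.mul' k H) LinearMap.id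
    ∘ₗ (TensorProduct.assoc k H H H).symm.toLinearMap
    ∘ₗ map d (Coalgebra.comul : H →ₗ[k] H ⊗[k] H)

section Associator

variable {R M N P Q : Type*} [CommSemiring R] [AddCommMonoid M] [AddCommMonoid N]
  [AddCommMonoid P] [AddCommMonoid Q] [Module R M] [Module R N] [Module R P] [Module R Q]

theorem rTensor_comp_assoc (f : M →ₗ[R] Q) :
    f.rTensor (N ⊗[R] P) ∘ₗ (TensorProduct.assoc R M N P).toLinearMap
      = (TensorProduct.assoc R Q N P).toLinearMap ∘ₗ (f.rTensor N).rTensor P :=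
  TensorProduct.ext_threefold fun _ _ _ => rfl

theorem lTensor_lTensor_comp_assoc (f : P →ₗ[R] Q) :
    (f.lTensor N).lTensor M ∘ₗ (TensorProduct.assoc R M N P).toLinearMap
      = (TensorProduct.assoc R M N Q).toLinearMap ∘ₗ f.lTensor (M ⊗[R] N) :=
  TensorProduct.ext_threefold fun _ _ _ => rfl

end Associator

section

variable {k A H}

theorem rTensor_emap_comp_DRmap :
    (emap k A H).rTensor H ∘ₗ DRmap k A H = LinearMap.id := by
  have counits : map (emap k A H) (smap k A H) ∘ₗ (tensorTensorTensorComm k A A H H).toLinearMap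
      = map ((TensorProduct.rid k A).toLinearMap ∘ₗ (Coalgebra.counit : A →ₗ[k] k).lTensor A)
          ((TensorProduct.lid k H).toLinearMap ∘ₗ (Coalgebra.counit : H →ₗ[k] k).rTensor H) := by
    ext a a' h h'
    simp [emap, smap, smul_tmul', tmul_smul, smul_smul, mul_comm]
  ext a h
  simpa [DRmap, comul1] using congr($counits (Coalgebra.comul a ⊗ₜ[k] Coalgebra.comul h))

theorem lTensor_smap_comp_DLmap (d : A →ₗ[k] H) :
    (smap k A H).lTensor H ∘ₗ DLmap k A H d = fmap k A H d := by
  let Q : A ⊗[k] (H ⊗[k] H) →ₗ[k] H ⊗[k] H := map (LinearMap.mul' k H) LinearMap.id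
    ∘ₗ (TensorProduct.assoc k H H H).symm.toLinearMap ∘ₗ d.rTensor (H ⊗[k] H)
  have counit_left : map (tmap k A H d) (smap k A H)
        ∘ₗ (tensorTensorTensorComm k A A H H).toLinearMap
      = Q ∘ₗ map ((TensorProduct.rid k A).toLinearMap ∘ₗ (Coalgebra.counit : A →ₗ[k] k).lTensor A)
          LinearMap.id := by
    ext a a' h h'
    simp [Q, tmap, smap, smul_tmul', tmul_smul]
  ext b g
  simpa [DLmap, comul1, fmap, Q] using
    congr($counit_left (Coalgebra.comul b ⊗ₜ[k] Coalgebra.comul g))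

theorem rid_comp_lTensor_counit_comp_fmap (d : A →ₗ[k] H) :
    ((TensorProduct.rid k H).toLinearMap ∘ₗ (Coalgebra.counit : H →ₗ[k] k).lTensor H)
        ∘ₗ fmap k A H d = tmap k A H d := by
  have counit_right : (TensorProduct.rid k H).toLinearMap
        ∘ₗ (Coalgebra.counit : H →ₗ[k] k).lTensor H ∘ₗ map (LinearMap.mul' k H) LinearMap.id
        ∘ₗ (TensorProduct.assoc k H H H).symm.toLinearMap
      = LinearMap.mul' k H ∘ₗ ((TensorProduct.rid k H).toLinearMap
          ∘ₗ (Coalgebra.counit : H →ₗ[k] k).lTensor H).lTensor H := by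
    ext h h' h''
    simp
  ext b g
  simpa [fmap, tmap] using congr($counit_right (d b ⊗ₜ[k] Coalgebra.comul g))

theorem lTensor_rid_counit_comp_assoc_comp_lTensor_smap :
    ((TensorProduct.rid k H).toLinearMap ∘ₗ (Coalgebra.counit : H →ₗ[k] k).lTensor H).lTensor A
        ∘ₗ (TensorProduct.assoc k A H H).toLinearMap ∘ₗ (smap k A H).lTensor (A ⊗[k] H)
      = (TensorProduct.rid k (A ⊗[k] H)).toLinearMap ∘ₗ (counit1 k A H).lTensor (A ⊗[k] H) := by
  ext a h b g
  simp [smap, counit1, smul_tmul', tmul_smul, smul_smul, mul_comm]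

theorem map_emap_DLmap_of_mem_cot {d : A →ₗ[k] H} {x : (A ⊗[k] H) ⊗[k] (A ⊗[k] H)}
    (hx : x ∈ cot k A H d) :
    map (emap k A H) (DLmap k A H d) x = TensorProduct.assoc k A H (A ⊗[k] H) x :=
  calc map (emap k A H) (DLmap k A H d) x
      = (emap k A H).rTensor _ ((DLmap k A H d).lTensor _ x) := by
        rw [← LinearMap.rTensor_comp_lTensor, LinearMap.comp_apply]
    _ = (emap k A H).rTensor _
          (TensorProduct.assoc k (A ⊗[k] H) H (A ⊗[k] H) ((DRmap k A H).rTensor _ x)) :=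
        congr_arg _ hx.symm
    _ = TensorProduct.assoc k A H (A ⊗[k] H)
          (((emap k A H).rTensor H ∘ₗ DRmap k A H).rTensor _ x) := by
        rw [LinearMap.rTensor_comp_apply]
        exact LinearMap.congr_fun (rTensor_comp_assoc _) _
    _ = TensorProduct.assoc k A H (A ⊗[k] H) x := by
        rw [rTensor_emap_comp_DRmap, LinearMap.rTensor_id_apply]

theorem assoc_lTensor_smap_of_mem_cot {d : A →ₗ[k] H} {x : (A ⊗[k] H) ⊗[k] (A ⊗[k] H)}
    (hx : x ∈ cot k A H d) :
    TensorProduct.assoc k A H H ((smap k A H).lTensor _ x)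
      = map (emap k A H) (fmap k A H d) x :=
  calc TensorProduct.assoc k A H H ((smap k A H).lTensor _ x)
      = ((smap k A H).lTensor H).lTensor A (map (emap k A H) (DLmap k A H d) x) := by
        rw [map_emap_DLmap_of_mem_cot hx]
        exact (LinearMap.congr_fun (lTensor_lTensor_comp_assoc _) _).symm
    _ = map (emap k A H) (fmap k A H d) x := by
        rw [← lTensor_smap_comp_DLmap, ← LinearMap.lTensor_comp_map, LinearMap.comp_apply]

theorem rid_lTensor_counit1_of_mem_cot {d : A →ₗ[k] H} {x : (A ⊗[k] H) ⊗[k] (A ⊗[k] H)}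
    (hx : x ∈ cot k A H d) :
    TensorProduct.rid k (A ⊗[k] H) ((counit1 k A H).lTensor _ x)
      = map (emap k A H) (tmap k A H d) x :=
  calc TensorProduct.rid k (A ⊗[k] H) ((counit1 k A H).lTensor _ x)
      = ((TensorProduct.rid k H).toLinearMap ∘ₗ (Coalgebra.counit : H →ₗ[k] k).lTensor H).lTensor A
          (TensorProduct.assoc k A H H ((smap k A H).lTensor _ x)) :=
        (LinearMap.congr_fun lTensor_rid_counit_comp_assoc_comp_lTensor_smap x).symm
    _ = map (emap k A H) (tmap k A H d) x := by
        rw [assoc_lTensor_smap_of_mem_cot hx, ← rid_comp_lTensor_counit_comp_fmap,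
          ← LinearMap.lTensor_comp_map, LinearMap.comp_apply]

end

theorem statement3 (d : A →ₗ[k] H) :
    ∀ x ∈ cot k A H d,
      map (emap k A H) (DLmap k A H d) x
          = (TensorProduct.assoc k A H (A ⊗[k] H)).toLinearMap x
      ∧ (TensorProduct.assoc k A H H).toLinearMap (map LinearMap.id (smap k A H) x)
          = map (emap k A H) (fmap k A H d) x
      ∧ (TensorProduct.rid k (A ⊗[k] H)) (map LinearMap.id (counit1 k A H) x)
          = map (emap k A H) (tmap k A H d) x :=
  fun _ hx => ⟨map_emap_DLmap_of_mem_cot hx, assoc_lTensor_smap_of_mem_cot hx,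
    rid_lTensor_counit1_of_mem_cot hx⟩

end
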